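/- arXiv:2605.06272 — 2 statements merged into one kernel-verified Lean document; each statement's English description precedes it below -/
import Mathlib

section
/- Define F : ℝⁿ → ℝⁿ by F(x) := (∫_{ℝⁿ} (y − x₀*(x,y)) · f₀(x₀*(x,y)) · f₁(y) dy) / (∫_{ℝⁿ} f₀(x₀*(x,y)) · f₁(y) dy) at every x for which the denominator is finite and strictly positive and the numerator integral converges absolutely, and F(x) := 0 otherwise. Then for every bounded measurable function h : ℝⁿ → ℝ, the ℝⁿ-valued expectations satisfy E[(X₁ − X₀) · h(X_t)] = E[F(X_t) · h(X_t)]. (Characterizing-property formulation of Theorem 1 of the paper: F(X_t) is a version of E[X₁ − X₀ | X_t].) -/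
open MeasureTheory ProbabilityTheory Classical
open scoped ENNReal
noncomputable section



def x0star (n : ℕ) (t : ℝ) (x y : EuclideanSpace ℝ (Fin n)) : EuclideanSpace ℝ (Fin n) :=
  (1 - t)⁻¹ • (x - t • y)

lemma x0star_interp {n : ℕ} {t : ℝ} (ht1 : t < 1) (a b : EuclideanSpace ℝ (Fin n)) :
    x0star n t ((1 - t) • a + t • b) b = a := by
  have h1t : (1 - t) ≠ 0 := by intro hh; linarith [hh]
  simp only [x0star, add_sub_cancel_right, smul_smul, inv_mul_cancel₀ h1t, one_smul]

lemma si_mcov {n : ℕ} {t : ℝ} (ht1 : t < 1) (b : EuclideanSpace ℝ (Fin n)) :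
    Measure.map (fun a : EuclideanSpace ℝ (Fin n) => (1 - t) • a + t • b) volume
      = (ENNReal.ofReal ((1 - t) ^ n))⁻¹ • volume := by
  have h1t : (0:ℝ) < 1 - t := by linarith
  have hdet : LinearMap.det ((1 - t) • (LinearMap.id : EuclideanSpace ℝ (Fin n) →ₗ[ℝ]
      EuclideanSpace ℝ (Fin n))) = (1 - t) ^ n := by
    rw [LinearMap.det_smul, LinearMap.det_id, mul_one, finrank_euclideanSpace_fin]
  have hmap : Measure.map (fun a : EuclideanSpace ℝ (Fin n) => (1 - t) • a) volume
      = (ENNReal.ofReal ((1 - t) ^ n))⁻¹ • volume := by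
    have h := Measure.map_linearMap_addHaar_eq_smul_addHaar (μ := volume)
      (f := (1 - t) • (LinearMap.id : EuclideanSpace ℝ (Fin n) →ₗ[ℝ] EuclideanSpace ℝ (Fin n)))
      (by rw [hdet]; positivity)
    have hco : ⇑((1 - t) • (LinearMap.id : EuclideanSpace ℝ (Fin n) →ₗ[ℝ]
        EuclideanSpace ℝ (Fin n))) = fun a => (1 - t) • a := by
      funext a; simp
    rw [hco, hdet] at h
    rw [h, abs_of_pos (by positivity : (0:ℝ) < ((1 - t) ^ n)⁻¹),
      ENNReal.ofReal_inv_of_pos (by positivity : (0:ℝ) < (1 - t) ^ n)]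
  have hcomp : (fun a : EuclideanSpace ℝ (Fin n) => (1 - t) • a + t • b)
      = (fun x => x + t • b) ∘ (fun a => (1 - t) • a) := rfl
  rw [hcomp, ← Measure.map_map (measurable_add_const _) (measurable_const_smul _), hmap,
    Measure.map_smul, map_add_right_eq_self]

lemma si_covL {n : ℕ} {t : ℝ} (ht1 : t < 1) (b : EuclideanSpace ℝ (Fin n))
    {g : EuclideanSpace ℝ (Fin n) → ℝ≥0∞} (hg : Measurable g) :
    ∫⁻ a, g ((1 - t) • a + t • b) = (ENNReal.ofReal ((1 - t) ^ n))⁻¹ * ∫⁻ x, g x := by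
  have hφ : Measurable (fun a : EuclideanSpace ℝ (Fin n) => (1 - t) • a + t • b) :=
    (measurable_const_smul (1 - t)).add_const (t • b)
  rw [← lintegral_map hg hφ, si_mcov ht1 b, lintegral_smul_measure, smul_eq_mul]

lemma si_covB {n : ℕ} {t : ℝ} (ht1 : t < 1) (b : EuclideanSpace ℝ (Fin n))
    {F : Type*} [NormedAddCommGroup F] [NormedSpace ℝ F]
    (φ : EuclideanSpace ℝ (Fin n) → F) :
    ∫ a, φ ((1 - t) • a + t • b) = ((1 - t) ^ n)⁻¹ • ∫ x, φ x := by
  have h1t : (0:ℝ) < 1 - t := by linarith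
  calc ∫ a, φ ((1 - t) • a + t • b)
      = ∫ a, (fun y => φ (y + t • b)) ((1 - t) • a) := rfl
    _ = |((1 - t) ^ Module.finrank ℝ (EuclideanSpace ℝ (Fin n)))⁻¹| • ∫ y, φ (y + t • b) :=
        Measure.integral_comp_smul volume (fun y => φ (y + t • b)) (1 - t)
    _ = ((1 - t) ^ n)⁻¹ • ∫ x, φ x := by
        rw [integral_add_right_eq_self, finrank_euclideanSpace_fin,
          abs_of_pos (by positivity : (0:ℝ) < ((1 - t) ^ n)⁻¹)]

lemma si_covProd {n : ℕ} {t : ℝ} (ht1 : t < 1)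
    {w : EuclideanSpace ℝ (Fin n) × EuclideanSpace ℝ (Fin n) → ℝ≥0∞} (hw : Measurable w) :
    ∫⁻ p : EuclideanSpace ℝ (Fin n) × EuclideanSpace ℝ (Fin n),
        w ((1 - t) • p.1 + t • p.2, p.2) ∂(volume.prod volume)
      = (ENNReal.ofReal ((1 - t) ^ n))⁻¹ * ∫⁻ p, w p ∂(volume.prod volume) := by
  have hT : Measurable (fun p : EuclideanSpace ℝ (Fin n) × EuclideanSpace ℝ (Fin n) =>
      ((1 - t) • p.1 + t • p.2, p.2)) :=
    by fun_prop
  rw [MeasureTheory.lintegral_prod_symm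
      (fun p : EuclideanSpace ℝ (Fin n) × EuclideanSpace ℝ (Fin n) =>
        w ((1 - t) • p.1 + t • p.2, p.2)) (hw.comp hT).aemeasurable,
    MeasureTheory.lintegral_prod_symm w hw.aemeasurable]
  calc ∫⁻ b, ∫⁻ a, w ((1 - t) • a + t • b, b)
      = ∫⁻ b, (ENNReal.ofReal ((1 - t) ^ n))⁻¹ * ∫⁻ x, w (x, b) := by
        refine lintegral_congr fun b => ?_
        exact si_covL ht1 b (hw.comp (measurable_id.prodMk measurable_const))
    _ = (ENNReal.ofReal ((1 - t) ^ n))⁻¹ * ∫⁻ b, ∫⁻ x, w (x, b) := by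
        rw [lintegral_const_mul _ hw.lintegral_prod_left']

lemma si_wdprod {α β : Type*} [MeasurableSpace α] [MeasurableSpace β]
    (μ : Measure α) (ν : Measure β)
    {f : α → ℝ≥0∞} {g : β → ℝ≥0∞} (hf : Measurable f) (hg : Measurable g)
    [SigmaFinite μ] [SigmaFinite (μ.withDensity f)] [SigmaFinite (ν.withDensity g)]
    [SigmaFinite ν] :
    (μ.withDensity f).prod (ν.withDensity g)
      = (μ.prod ν).withDensity (fun p => f p.1 * g p.2) := by
  refine (Measure.prod_eq (μ := μ.withDensity f) (ν := ν.withDensity g)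
    (μν := (μ.prod ν).withDensity fun p => f p.1 * g p.2) fun s u hs hu => ?_)
  rw [withDensity_apply _ (hs.prod hu), ← Measure.prod_restrict s u,
    MeasureTheory.lintegral_prod (fun p : α × β => f p.1 * g p.2)
      ((hf.comp measurable_fst).mul (hg.comp measurable_snd)).aemeasurable]
  simp_rw [lintegral_const_mul _ hg, lintegral_mul_const _ hf,
    withDensity_apply _ hs, withDensity_apply _ hu]

lemma si_prob_facts {n : ℕ} (f₀ : EuclideanSpace ℝ (Fin n) → ℝ) (hf₀m : Measurable f₀)
    (hf₀0 : ∀ z, 0 ≤ f₀ z)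
    (hp : IsProbabilityMeasure (volume.withDensity (fun z => ENNReal.ofReal (f₀ z)))) :
    (∫⁻ a, ENNReal.ofReal (f₀ a) = 1) ∧ Integrable f₀ volume := by
  have h1 : ∫⁻ a, ENNReal.ofReal (f₀ a) = 1 := by
    have := hp.measure_univ
    rwa [withDensity_apply _ MeasurableSet.univ, setLIntegral_univ] at this
  refine ⟨h1, ⟨hf₀m.aestronglyMeasurable, ?_⟩⟩
  rw [hasFiniteIntegral_iff_norm]
  have heq : ∫⁻ a, ENNReal.ofReal ‖f₀ a‖ = ∫⁻ a, ENNReal.ofReal (f₀ a) :=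
    lintegral_congr fun a => by rw [Real.norm_eq_abs, abs_of_nonneg (hf₀0 a)]
  rw [heq, h1]; exact ENNReal.one_lt_top

variable {n : ℕ}
local notation "E" => EuclideanSpace ℝ (Fin n)

lemma si_int_density {G : Type*} [NormedAddCommGroup G] [NormedSpace ℝ G]
    {f₀ f₁ : EuclideanSpace ℝ (Fin n) → ℝ}
    (hf₀m : Measurable f₀) (hf₁m : Measurable f₁)
    (hf₀0 : ∀ z, 0 ≤ f₀ z) (hf₁0 : ∀ z, 0 ≤ f₁ z)
    [SigmaFinite (volume.withDensity fun z : E => ENNReal.ofReal (f₀ z))]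
    [SigmaFinite (volume.withDensity fun z : E => ENNReal.ofReal (f₁ z))]
    (F : E × E → G) :
    ∫ p, F p ∂((volume.withDensity fun z => ENNReal.ofReal (f₀ z)).prod
        (volume.withDensity fun z => ENNReal.ofReal (f₁ z)))
      = ∫ p, (f₀ p.1 * f₁ p.2) • F p ∂(volume.prod volume) := by
  rw [si_wdprod volume volume (hf₀m.ennreal_ofReal) (hf₁m.ennreal_ofReal)]
  have hfun : (fun p : E × E => ENNReal.ofReal (f₀ p.1) * ENNReal.ofReal (f₁ p.2))
      = fun p : E × E => ((fun q : E × E => (f₀ q.1 * f₁ q.2).toNNReal) p : ℝ≥0∞) := by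
    funext p
    rw [← ENNReal.ofReal_mul (hf₀0 _)]
    rfl
  have hm : Measurable fun q : E × E => (f₀ q.1 * f₁ q.2).toNNReal :=
    ((hf₀m.comp measurable_fst).mul (hf₁m.comp measurable_snd)).real_toNNReal
  rw [hfun, integral_withDensity_eq_integral_smul hm F]
  refine integral_congr_ae (Filter.Eventually.of_forall fun p => ?_)
  show (f₀ p.1 * f₁ p.2).toNNReal • F p = (f₀ p.1 * f₁ p.2) • F p
  rw [NNReal.smul_def, Real.coe_toNNReal _ (mul_nonneg (hf₀0 _) (hf₁0 _))]

lemma si_integrable_smul_id {f₀ : EuclideanSpace ℝ (Fin n) → ℝ}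
    (hf₀m : Measurable f₀) (hf₀0 : ∀ z, 0 ≤ f₀ z)
    (h : Integrable (fun x : E => x) (volume.withDensity fun z => ENNReal.ofReal (f₀ z))) :
    Integrable (fun a : E => f₀ a • a) volume := by
  have h2 : Integrable (fun a : E => (f₀ a).toNNReal • a) volume := by
    rw [← integrable_withDensity_iff_integrable_smul hf₀m.real_toNNReal]
    exact h
  refine h2.congr (Filter.Eventually.of_forall fun a => ?_)
  show (f₀ a).toNNReal • a = f₀ a • a
  rw [NNReal.smul_def, Real.coe_toNNReal _ (hf₀0 a)]

/-- Numerator integral `∫ (y - x₀*(x,y)) f₀(x₀*(x,y)) f₁(y) dy`. -/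
def Fnum (n : ℕ) (f₀ f₁ : EuclideanSpace ℝ (Fin n) → ℝ) (t : ℝ)
    (x : EuclideanSpace ℝ (Fin n)) : EuclideanSpace ℝ (Fin n) :=
  ∫ y, (f₀ (x0star n t x y) * f₁ y) • (y - x0star n t x y)

/-- Denominator integral `∫ f₀(x₀*(x,y)) f₁(y) dy`. -/
def Fden (n : ℕ) (f₀ f₁ : EuclideanSpace ℝ (Fin n) → ℝ) (t : ℝ)
    (x : EuclideanSpace ℝ (Fin n)) : ℝ :=
  ∫ y, f₀ (x0star n t x y) * f₁ y

/-- The self-normalized importance-weighted velocity field: defined as numerator/denominator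
whenever the denominator is finite (integrable) and strictly positive and the numerator
converges absolutely (is integrable), and `0` otherwise. -/
def Fmap (n : ℕ) (f₀ f₁ : EuclideanSpace ℝ (Fin n) → ℝ) (t : ℝ)
    (x : EuclideanSpace ℝ (Fin n)) : EuclideanSpace ℝ (Fin n) :=
  if (Integrable (fun y => f₀ (x0star n t x y) * f₁ y) volume ∧
      0 < Fden n f₀ f₁ t x ∧
      Integrable (fun y => (f₀ (x0star n t x y) * f₁ y) • (y - x0star n t x y)) volume)
  then (Fden n f₀ f₁ t x)⁻¹ • Fnum n f₀ f₁ t x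
  else 0


section meas
variable {n : ℕ} {f₀ f₁ : EuclideanSpace ℝ (Fin n) → ℝ} {t : ℝ}

lemma si_meas_x0 : Measurable (fun p : EuclideanSpace ℝ (Fin n) × EuclideanSpace ℝ (Fin n) => x0star n t p.1 p.2) :=
  by unfold x0star; fun_prop

lemma si_meas_denInt (hf₀m : Measurable f₀) (hf₁m : Measurable f₁) :
    Measurable (fun p : EuclideanSpace ℝ (Fin n) × EuclideanSpace ℝ (Fin n) => f₀ (x0star n t p.1 p.2) * f₁ p.2) :=
  (hf₀m.comp si_meas_x0).mul (hf₁m.comp measurable_snd)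

lemma si_meas_numInt (hf₀m : Measurable f₀) (hf₁m : Measurable f₁) :
    Measurable (fun p : EuclideanSpace ℝ (Fin n) × EuclideanSpace ℝ (Fin n) =>
      (f₀ (x0star n t p.1 p.2) * f₁ p.2) • (p.2 - x0star n t p.1 p.2)) :=
  (si_meas_denInt hf₀m hf₁m).smul (measurable_snd.sub si_meas_x0)

lemma si_meas_Fden (hf₀m : Measurable f₀) (hf₁m : Measurable f₁) :
    Measurable (Fden n f₀ f₁ t) :=
  (StronglyMeasurable.integral_prod_right'
    (f := fun p : EuclideanSpace ℝ (Fin n) × EuclideanSpace ℝ (Fin n) => f₀ (x0star n t p.1 p.2) * f₁ p.2)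
    (si_meas_denInt hf₀m hf₁m).stronglyMeasurable).measurable

lemma si_meas_Fnum (hf₀m : Measurable f₀) (hf₁m : Measurable f₁) :
    Measurable (Fnum n f₀ f₁ t) :=
  (StronglyMeasurable.integral_prod_right'
    (f := fun p : EuclideanSpace ℝ (Fin n) × EuclideanSpace ℝ (Fin n) => (f₀ (x0star n t p.1 p.2) * f₁ p.2) • (p.2 - x0star n t p.1 p.2))
    (si_meas_numInt hf₀m hf₁m).stronglyMeasurable).measurable

lemma si_Fmap_eq_indicator :
    Fmap n f₀ f₁ t = Set.indicator
      ({x | Integrable (fun y => f₀ (x0star n t x y) * f₁ y) volume} ∩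
        {x | 0 < Fden n f₀ f₁ t x} ∩
        {x | Integrable (fun y => (f₀ (x0star n t x y) * f₁ y) • (y - x0star n t x y)) volume})
      (fun x => (Fden n f₀ f₁ t x)⁻¹ • Fnum n f₀ f₁ t x) := by
  funext x
  rw [Set.indicator_apply, Fmap]
  congr 1
  simp only [Set.mem_inter_iff, Set.mem_setOf_eq, eq_iff_iff]
  tauto

lemma si_meas_Fmap (hf₀m : Measurable f₀) (hf₁m : Measurable f₁) :
    Measurable (Fmap n f₀ f₁ t) := by
  rw [si_Fmap_eq_indicator]
  refine Measurable.indicator ?_ ?_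
  · exact ((si_meas_Fden hf₀m hf₁m).inv).smul (si_meas_Fnum hf₀m hf₁m)
  · refine MeasurableSet.inter (MeasurableSet.inter ?_ ?_) ?_
    · exact measurableSet_integrable
        ((si_meas_denInt (f₀ := f₀) (f₁ := f₁) (t := t) hf₀m hf₁m).stronglyMeasurable)
    · exact measurableSet_lt measurable_const (si_meas_Fden hf₀m hf₁m)
    · exact measurableSet_integrable
        ((si_meas_numInt (f₀ := f₀) (f₁ := f₁) (t := t) hf₀m hf₁m).stronglyMeasurable)

end meas


section ptwise
variable {n : ℕ} {f₀ f₁ : EuclideanSpace ℝ (Fin n) → ℝ} {t : ℝ}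

lemma si_ptwise (hf₀0 : ∀ z, 0 ≤ f₀ z) (hf₁0 : ∀ z, 0 ≤ f₁ z)
    (x : EuclideanSpace ℝ (Fin n))
    (hden : Integrable (fun y => f₀ (x0star n t x y) * f₁ y) volume)
    (hnum : Integrable (fun y => (f₀ (x0star n t x y) * f₁ y) • (y - x0star n t x y)) volume) :
    Fden n f₀ f₁ t x • Fmap n f₀ f₁ t x = Fnum n f₀ f₁ t x := by
  by_cases hpos : 0 < Fden n f₀ f₁ t x
  · rw [Fmap, if_pos ⟨hden, hpos, hnum⟩, smul_inv_smul₀ (ne_of_gt hpos)]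
  · have h0 : Fden n f₀ f₁ t x = 0 :=
      le_antisymm (not_lt.1 hpos)
        (integral_nonneg fun y => mul_nonneg (hf₀0 _) (hf₁0 _))
    have hae : (fun y => f₀ (x0star n t x y) * f₁ y) =ᵐ[volume] 0 :=
      (integral_eq_zero_iff_of_nonneg (fun y => mul_nonneg (hf₀0 _) (hf₁0 _)) hden).mp h0
    have hnum0 : Fnum n f₀ f₁ t x = 0 := by
      rw [Fnum]
      refine integral_eq_zero_of_ae (hae.mono fun y hy => ?_)
      simp only [Pi.zero_apply] at hy ⊢
      rw [hy, zero_smul]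
    rw [Fmap, if_neg (by rintro ⟨_, hp, _⟩; exact hpos hp), smul_zero, hnum0]

end ptwise


section reduce
variable {n : ℕ}

lemma si_covProd' {n : ℕ} {t : ℝ} (ht1 : t < 1)
    {w : EuclideanSpace ℝ (Fin n) × EuclideanSpace ℝ (Fin n) → ℝ≥0∞} (hw : Measurable w) :
    ∫⁻ p, w p ∂((volume : Measure (EuclideanSpace ℝ (Fin n))).prod volume)
      = ENNReal.ofReal ((1 - t) ^ n) *
        ∫⁻ p : EuclideanSpace ℝ (Fin n) × EuclideanSpace ℝ (Fin n),
          w ((1 - t) • p.1 + t • p.2, p.2) ∂(volume.prod volume) := by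
  have h1t : (0:ℝ) < 1 - t := by linarith
  rw [si_covProd ht1 hw, ← mul_assoc,
    ENNReal.mul_inv_cancel (ne_of_gt (ENNReal.ofReal_pos.mpr (by positivity))) ENNReal.ofReal_ne_top,
    one_mul]

lemma si_reduce {Ω : Type*} [MeasurableSpace Ω] (μ : Measure Ω) [IsProbabilityMeasure μ]
    {n : ℕ}
    (X₀ X₁ : Ω → EuclideanSpace ℝ (Fin n)) (hX₀ : Measurable X₀) (hX₁ : Measurable X₁)
    (hindep : IndepFun X₀ X₁ μ)
    (f₀ f₁ : EuclideanSpace ℝ (Fin n) → ℝ)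
    (hf₀m : Measurable f₀) (hf₁m : Measurable f₁)
    (hf₀0 : ∀ z, 0 ≤ f₀ z) (hf₁0 : ∀ z, 0 ≤ f₁ z)
    (hlaw₀ : Measure.map X₀ μ = volume.withDensity (fun z => ENNReal.ofReal (f₀ z)))
    (hlaw₁ : Measure.map X₁ μ = volume.withDensity (fun z => ENNReal.ofReal (f₁ z)))
    {t : ℝ} (ht1 : t < 1)
    (κ : EuclideanSpace ℝ (Fin n) × EuclideanSpace ℝ (Fin n) → EuclideanSpace ℝ (Fin n))
    (hκm : Measurable κ)
    (hΨ : Integrable (fun p : EuclideanSpace ℝ (Fin n) × EuclideanSpace ℝ (Fin n) =>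
        (f₀ (x0star n t p.1 p.2) * f₁ p.2) • κ p) (volume.prod volume)) :
    ∫ ω, κ ((1 - t) • X₀ ω + t • X₁ ω, X₁ ω) ∂μ
      = ((1 - t) ^ n)⁻¹ •
          ∫ x, ∫ b, (f₀ (x0star n t x b) * f₁ b) • κ (x, b) ∂volume ∂volume := by
  have h1t : (0:ℝ) < 1 - t := by linarith
  haveI hP₀ : IsProbabilityMeasure (volume.withDensity fun z => ENNReal.ofReal (f₀ z)) := by
    rw [← hlaw₀]; exact Measure.isProbabilityMeasure_map hX₀.aemeasurable
  haveI hP₁ : IsProbabilityMeasure (volume.withDensity fun z => ENNReal.ofReal (f₁ z)) := by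
    rw [← hlaw₁]; exact Measure.isProbabilityMeasure_map hX₁.aemeasurable
  set Ψ : EuclideanSpace ℝ (Fin n) × EuclideanSpace ℝ (Fin n) → EuclideanSpace ℝ (Fin n) :=
    fun p => (f₀ (x0star n t p.1 p.2) * f₁ p.2) • κ p with hΨdef
  have hΨm : Measurable Ψ := (si_meas_denInt hf₀m hf₁m).smul hκm
  have hTm : Measurable (fun p : EuclideanSpace ℝ (Fin n) × EuclideanSpace ℝ (Fin n) =>
      ((1 - t) • p.1 + t • p.2, p.2)) :=
    by fun_prop
  -- integrability of Ψ ∘ T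
  have hGint : Integrable (fun p : EuclideanSpace ℝ (Fin n) × EuclideanSpace ℝ (Fin n) =>
      Ψ ((1 - t) • p.1 + t • p.2, p.2)) (volume.prod volume) := by
    refine ⟨(hΨm.comp hTm).aestronglyMeasurable, ?_⟩
    rw [hasFiniteIntegral_iff_norm]
    have := si_covProd (n := n) ht1 (w := fun p => ENNReal.ofReal ‖Ψ p‖)
      (hΨm.norm.ennreal_ofReal)
    rw [this]
    have hfin : ∫⁻ p, ENNReal.ofReal ‖Ψ p‖ ∂(volume.prod volume) < ⊤ := by
      rw [← hasFiniteIntegral_iff_norm]; exact hΨ.2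
    exact ENNReal.mul_lt_top (by simp; positivity) hfin
  -- main chain
  have hpair : AEMeasurable (fun ω => (X₀ ω, X₁ ω)) μ := (hX₀.prodMk hX₁).aemeasurable
  have hmapeq : Measure.map (fun ω => (X₀ ω, X₁ ω)) μ
      = (volume.withDensity fun z => ENNReal.ofReal (f₀ z)).prod
          (volume.withDensity fun z => ENNReal.ofReal (f₁ z)) := by
    rw [← hlaw₀, ← hlaw₁]
    exact (indepFun_iff_map_prod_eq_prod_map_map hX₀.aemeasurable hX₁.aemeasurable).mp hindep
  calc ∫ ω, κ ((1 - t) • X₀ ω + t • X₁ ω, X₁ ω) ∂μ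
      = ∫ p, (fun q : EuclideanSpace ℝ (Fin n) × EuclideanSpace ℝ (Fin n) =>
          κ ((1 - t) • q.1 + t • q.2, q.2)) p
          ∂(Measure.map (fun ω => (X₀ ω, X₁ ω)) μ) := by
        have hsm : AEStronglyMeasurable
            (fun q : EuclideanSpace ℝ (Fin n) × EuclideanSpace ℝ (Fin n) =>
              κ ((1 - t) • q.1 + t • q.2, q.2)) (Measure.map (fun ω => (X₀ ω, X₁ ω)) μ) :=
          (Measurable.aestronglyMeasurable (hκm.comp hTm))
        rw [integral_map hpair hsm]
    _ = ∫ p, (fun q : EuclideanSpace ℝ (Fin n) × EuclideanSpace ℝ (Fin n) =>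
          κ ((1 - t) • q.1 + t • q.2, q.2)) p
          ∂((volume.withDensity fun z => ENNReal.ofReal (f₀ z)).prod
            (volume.withDensity fun z => ENNReal.ofReal (f₁ z))) := by rw [hmapeq]
    _ = ∫ p : EuclideanSpace ℝ (Fin n) × EuclideanSpace ℝ (Fin n),
          (f₀ p.1 * f₁ p.2) • κ ((1 - t) • p.1 + t • p.2, p.2) ∂(volume.prod volume) :=
        si_int_density hf₀m hf₁m hf₀0 hf₁0 _
    _ = ∫ p : EuclideanSpace ℝ (Fin n) × EuclideanSpace ℝ (Fin n),
          Ψ ((1 - t) • p.1 + t • p.2, p.2) ∂(volume.prod volume) := by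
        refine integral_congr_ae (Filter.Eventually.of_forall fun p => ?_)
        rw [hΨdef]
        simp only [x0star_interp ht1]
    _ = ∫ b, ∫ a, Ψ ((1 - t) • a + t • b, b) ∂volume ∂volume :=
        MeasureTheory.integral_prod_symm _ hGint
    _ = ∫ b, ((1 - t) ^ n)⁻¹ • ∫ x, Ψ (x, b) ∂volume ∂volume := by
        refine integral_congr_ae (Filter.Eventually.of_forall fun b => ?_)
        exact si_covB ht1 b (fun x => Ψ (x, b))
    _ = ((1 - t) ^ n)⁻¹ • ∫ b, ∫ x, Ψ (x, b) ∂volume ∂volume := integral_smul _ _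
    _ = ((1 - t) ^ n)⁻¹ • ∫ x, ∫ b, Ψ (x, b) ∂volume ∂volume := by
        rw [MeasureTheory.integral_integral_swap]
        exact hΨ.swap
end reduce


lemma si_ofReal_norm {r : ℝ} (hr : 0 ≤ r) : ENNReal.ofReal ‖r‖ = ENNReal.ofReal r := by
  rw [Real.norm_eq_abs, abs_of_nonneg hr]

set_option maxHeartbeats 2000000 in
/-- **Theorem 1** (paper, characterizing-property form): for every bounded measurable
`h : ℝⁿ → ℝ`, `E[(X₁ - X₀) h(X_t)] = E[F(X_t) h(X_t)]`, i.e. `F(X_t)` is a version of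
`E[X₁ - X₀ | X_t]`. -/
theorem stmt2 {Ω : Type*} [MeasurableSpace Ω] (μ : Measure Ω) [IsProbabilityMeasure μ]
    {n : ℕ} (hn : 1 ≤ n)
    (X₀ X₁ : Ω → EuclideanSpace ℝ (Fin n)) (hX₀ : Measurable X₀) (hX₁ : Measurable X₁)
    (hindep : IndepFun X₀ X₁ μ)
    (f₀ f₁ : EuclideanSpace ℝ (Fin n) → ℝ)
    (hf₀m : Measurable f₀) (hf₁m : Measurable f₁)
    (hf₀0 : ∀ z, 0 ≤ f₀ z) (hf₁0 : ∀ z, 0 ≤ f₁ z)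
    (hlaw₀ : Measure.map X₀ μ = volume.withDensity (fun z => ENNReal.ofReal (f₀ z)))
    (hlaw₁ : Measure.map X₁ μ = volume.withDensity (fun z => ENNReal.ofReal (f₁ z)))
    (hi₀ : Integrable X₀ μ) (hi₁ : Integrable X₁ μ)
    (t : ℝ) (ht0 : 0 ≤ t) (ht1 : t < 1) :
    ∀ h : EuclideanSpace ℝ (Fin n) → ℝ, Measurable h → (∃ C, ∀ x, |h x| ≤ C) →
      ∫ ω, h ((1 - t) • X₀ ω + t • X₁ ω) • (X₁ ω - X₀ ω) ∂μ
        = ∫ ω, h ((1 - t) • X₀ ω + t • X₁ ω) •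
            Fmap n f₀ f₁ t ((1 - t) • X₀ ω + t • X₁ ω) ∂μ := by
  intro h hm hCb
  obtain ⟨C, hC⟩ := hCb
  have hC0 : 0 ≤ C := le_trans (abs_nonneg _) (hC 0)
  have h1t : (0:ℝ) < 1 - t := by linarith
  haveI hP₀ : IsProbabilityMeasure (volume.withDensity fun z :
      EuclideanSpace ℝ (Fin n) => ENNReal.ofReal (f₀ z)) := by
    rw [← hlaw₀]; exact Measure.isProbabilityMeasure_map hX₀.aemeasurable
  haveI hP₁ : IsProbabilityMeasure (volume.withDensity fun z :
      EuclideanSpace ℝ (Fin n) => ENNReal.ofReal (f₁ z)) := by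
    rw [← hlaw₁]; exact Measure.isProbabilityMeasure_map hX₁.aemeasurable
  -- basic integrability of densities
  have hIf₀ : Integrable f₀ volume := (si_prob_facts f₀ hf₀m hf₀0 hP₀).2
  have hIf₁ : Integrable f₁ volume := (si_prob_facts f₁ hf₁m hf₁0 hP₁).2
  have hId₀ : Integrable (fun x : EuclideanSpace ℝ (Fin n) => x)
      (volume.withDensity fun z => ENNReal.ofReal (f₀ z)) := by
    rw [← hlaw₀]
    exact (integrable_map_measure aestronglyMeasurable_id hX₀.aemeasurable).mpr
      (by simpa [Function.comp] using hi₀)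
  have hId₁ : Integrable (fun x : EuclideanSpace ℝ (Fin n) => x)
      (volume.withDensity fun z => ENNReal.ofReal (f₁ z)) := by
    rw [← hlaw₁]
    exact (integrable_map_measure aestronglyMeasurable_id hX₁.aemeasurable).mpr
      (by simpa [Function.comp] using hi₁)
  have hsm₀ : Integrable (fun a : EuclideanSpace ℝ (Fin n) => f₀ a • a) volume :=
    si_integrable_smul_id hf₀m hf₀0 hId₀
  have hsm₁ : Integrable (fun a : EuclideanSpace ℝ (Fin n) => f₁ a • a) volume :=
    si_integrable_smul_id hf₁m hf₁0 hId₁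
  have hIf₀n : Integrable (fun a : EuclideanSpace ℝ (Fin n) => f₀ a * ‖a‖) volume := by
    have := hsm₀.norm
    refine this.congr (Filter.Eventually.of_forall fun a => ?_)
    show ‖f₀ a • a‖ = f₀ a * ‖a‖
    rw [norm_smul, Real.norm_eq_abs, abs_of_nonneg (hf₀0 a)]
  have hIf₁n : Integrable (fun a : EuclideanSpace ℝ (Fin n) => f₁ a * ‖a‖) volume := by
    have := hsm₁.norm
    refine this.congr (Filter.Eventually.of_forall fun a => ?_)
    show ‖f₁ a • a‖ = f₁ a * ‖a‖
    rw [norm_smul, Real.norm_eq_abs, abs_of_nonneg (hf₁0 a)]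
  -- the dominated product integrable bound
  have hgint : Integrable (fun p : EuclideanSpace ℝ (Fin n) × EuclideanSpace ℝ (Fin n) =>
      f₀ p.1 * ‖p.1‖ * f₁ p.2 + f₀ p.1 * (f₁ p.2 * ‖p.2‖)) (volume.prod volume) :=
    (hIf₀n.mul_prod hIf₁).add (hIf₀.mul_prod hIf₁n)
  -- J : the num integrand in (a,b) coordinates, without h
  have hJm : Measurable (fun p : EuclideanSpace ℝ (Fin n) × EuclideanSpace ℝ (Fin n) =>
      (f₀ p.1 * f₁ p.2) • (p.2 - p.1)) :=
    ((hf₀m.comp measurable_fst).mul (hf₁m.comp measurable_snd)).smul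
      (measurable_snd.sub measurable_fst)
  have hJint : Integrable (fun p : EuclideanSpace ℝ (Fin n) × EuclideanSpace ℝ (Fin n) =>
      (f₀ p.1 * f₁ p.2) • (p.2 - p.1)) (volume.prod volume) := by
    refine Integrable.mono' hgint hJm.aestronglyMeasurable
      (Filter.Eventually.of_forall fun p => ?_)
    rw [norm_smul, Real.norm_eq_abs, abs_of_nonneg (mul_nonneg (hf₀0 _) (hf₁0 _))]
    have h1 : ‖p.2 - p.1‖ ≤ ‖p.1‖ + ‖p.2‖ := by
      calc ‖p.2 - p.1‖ ≤ ‖p.2‖ + ‖p.1‖ := norm_sub_le _ _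
        _ = ‖p.1‖ + ‖p.2‖ := by ring
    have h2 : 0 ≤ f₀ p.1 * f₁ p.2 := mul_nonneg (hf₀0 _) (hf₁0 _)
    nlinarith [mul_le_mul_of_nonneg_left h1 h2, norm_nonneg p.1, norm_nonneg p.2,
      hf₀0 p.1, hf₁0 p.2]
  -- Nfun and Dfun
  set Nfun : EuclideanSpace ℝ (Fin n) → ℝ≥0∞ := fun x =>
    ∫⁻ b, ENNReal.ofReal ‖(f₀ (x0star n t x b) * f₁ b) • (b - x0star n t x b)‖ with hNdef
  set Dfun : EuclideanSpace ℝ (Fin n) → ℝ≥0∞ := fun x =>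
    ∫⁻ b, ENNReal.ofReal (f₀ (x0star n t x b) * f₁ b) with hDdef
  have hNmeas' : Measurable (fun p : EuclideanSpace ℝ (Fin n) × EuclideanSpace ℝ (Fin n) =>
      ENNReal.ofReal ‖(f₀ (x0star n t p.1 p.2) * f₁ p.2) • (p.2 - x0star n t p.1 p.2)‖) :=
    ((si_meas_numInt hf₀m hf₁m).norm).ennreal_ofReal
  have hDmeas' : Measurable (fun p : EuclideanSpace ℝ (Fin n) × EuclideanSpace ℝ (Fin n) =>
      ENNReal.ofReal (f₀ (x0star n t p.1 p.2) * f₁ p.2)) :=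
    (si_meas_denInt hf₀m hf₁m).ennreal_ofReal
  have hNmeas : Measurable Nfun := hNmeas'.lintegral_prod_right'
  have hDmeas : Measurable Dfun := hDmeas'.lintegral_prod_right'
  have hNtot : ∫⁻ x, Nfun x ∂volume ≠ ⊤ := by
    have e1 : ∫⁻ x, Nfun x ∂volume
        = ∫⁻ p : EuclideanSpace ℝ (Fin n) × EuclideanSpace ℝ (Fin n),
            ENNReal.ofReal ‖(f₀ (x0star n t p.1 p.2) * f₁ p.2) •
              (p.2 - x0star n t p.1 p.2)‖ ∂(volume.prod volume) :=
      (MeasureTheory.lintegral_prod _ hNmeas'.aemeasurable).symm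
    rw [e1, si_covProd' ht1 hNmeas']
    have e2 : ∫⁻ p : EuclideanSpace ℝ (Fin n) × EuclideanSpace ℝ (Fin n),
        ENNReal.ofReal ‖(f₀ (x0star n t ((1 - t) • p.1 + t • p.2) p.2) * f₁ p.2) •
          (p.2 - x0star n t ((1 - t) • p.1 + t • p.2) p.2)‖ ∂(volume.prod volume)
        = ∫⁻ p : EuclideanSpace ℝ (Fin n) × EuclideanSpace ℝ (Fin n),
            ENNReal.ofReal ‖(f₀ p.1 * f₁ p.2) • (p.2 - p.1)‖ ∂(volume.prod volume) := by
      refine lintegral_congr fun p => ?_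
      rw [x0star_interp ht1]
    rw [e2]
    refine ENNReal.mul_ne_top ENNReal.ofReal_ne_top ?_
    have := hJint.2
    rw [hasFiniteIntegral_iff_norm] at this
    exact this.ne
  have hDtot : ∫⁻ x, Dfun x ∂volume ≠ ⊤ := by
    have e1 : ∫⁻ x, Dfun x ∂volume
        = ∫⁻ p : EuclideanSpace ℝ (Fin n) × EuclideanSpace ℝ (Fin n),
            ENNReal.ofReal (f₀ (x0star n t p.1 p.2) * f₁ p.2) ∂(volume.prod volume) :=
      (MeasureTheory.lintegral_prod _ hDmeas'.aemeasurable).symm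
    rw [e1, si_covProd' ht1 hDmeas']
    have e2 : ∫⁻ p : EuclideanSpace ℝ (Fin n) × EuclideanSpace ℝ (Fin n),
        ENNReal.ofReal (f₀ (x0star n t ((1 - t) • p.1 + t • p.2) p.2) * f₁ p.2)
          ∂(volume.prod volume)
        = ∫⁻ p : EuclideanSpace ℝ (Fin n) × EuclideanSpace ℝ (Fin n),
            ENNReal.ofReal ‖f₀ p.1 * f₁ p.2‖ ∂(volume.prod volume) := by
      refine lintegral_congr fun p => ?_
      rw [x0star_interp ht1, si_ofReal_norm (mul_nonneg (hf₀0 _) (hf₁0 _))]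
    rw [e2]
    refine ENNReal.mul_ne_top ENNReal.ofReal_ne_top ?_
    have := (hIf₀.mul_prod hIf₁).2
    rw [hasFiniteIntegral_iff_norm] at this
    exact this.ne
  have haeN : ∀ᵐ x ∂(volume : Measure (EuclideanSpace ℝ (Fin n))), Nfun x < ⊤ :=
    ae_lt_top hNmeas hNtot
  have haeD : ∀ᵐ x ∂(volume : Measure (EuclideanSpace ℝ (Fin n))), Dfun x < ⊤ :=
    ae_lt_top hDmeas hDtot
  -- a.e. integrability of sections
  have hsecN : ∀ x, Nfun x < ⊤ →
      Integrable (fun y => (f₀ (x0star n t x y) * f₁ y) • (y - x0star n t x y)) volume := by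
    intro x hx
    refine ⟨((si_meas_numInt hf₀m hf₁m).comp measurable_prodMk_left).aestronglyMeasurable, ?_⟩
    rw [hasFiniteIntegral_iff_norm]
    exact hx
  have hsecD : ∀ x, Dfun x < ⊤ →
      Integrable (fun y => f₀ (x0star n t x y) * f₁ y) volume := by
    intro x hx
    refine ⟨((si_meas_denInt hf₀m hf₁m).comp measurable_prodMk_left).aestronglyMeasurable, ?_⟩
    rw [hasFiniteIntegral_iff_norm]
    have e : ∫⁻ y, ENNReal.ofReal ‖f₀ (x0star n t x y) * f₁ y‖ ∂volume = Dfun x :=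
      lintegral_congr fun y => si_ofReal_norm (mul_nonneg (hf₀0 _) (hf₁0 _))
    rw [e]; exact hx
  -- key a.e. identity
  have hae_key : ∀ᵐ x ∂(volume : Measure (EuclideanSpace ℝ (Fin n))),
      h x • Fnum n f₀ f₁ t x = Fden n f₀ f₁ t x • (h x • Fmap n f₀ f₁ t x) := by
    filter_upwards [haeN, haeD] with x hNx hDx
    rw [smul_comm, si_ptwise hf₀0 hf₁0 x (hsecD x hDx) (hsecN x hNx)]
  -- κ₁ and κ₂
  set κ₁ : EuclideanSpace ℝ (Fin n) × EuclideanSpace ℝ (Fin n) → EuclideanSpace ℝ (Fin n) :=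
    fun p => h p.1 • (p.2 - x0star n t p.1 p.2) with hκ₁def
  set κ₂ : EuclideanSpace ℝ (Fin n) × EuclideanSpace ℝ (Fin n) → EuclideanSpace ℝ (Fin n) :=
    fun p => h p.1 • Fmap n f₀ f₁ t p.1 with hκ₂def
  have hκ₁m : Measurable κ₁ := (hm.comp measurable_fst).smul (measurable_snd.sub si_meas_x0)
  have hκ₂m : Measurable κ₂ :=
    (hm.comp measurable_fst).smul ((si_meas_Fmap hf₀m hf₁m).comp measurable_fst)
  -- integrability of Ψ₁
  have hΨ₁m : Measurable (fun p : EuclideanSpace ℝ (Fin n) × EuclideanSpace ℝ (Fin n) =>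
      (f₀ (x0star n t p.1 p.2) * f₁ p.2) • κ₁ p) := (si_meas_denInt hf₀m hf₁m).smul hκ₁m
  have hΨ₁int : Integrable (fun p : EuclideanSpace ℝ (Fin n) × EuclideanSpace ℝ (Fin n) =>
      (f₀ (x0star n t p.1 p.2) * f₁ p.2) • κ₁ p) (volume.prod volume) := by
    refine ⟨hΨ₁m.aestronglyMeasurable, ?_⟩
    rw [hasFiniteIntegral_iff_norm, si_covProd' ht1 hΨ₁m.norm.ennreal_ofReal]
    have e2 : ∫⁻ p : EuclideanSpace ℝ (Fin n) × EuclideanSpace ℝ (Fin n),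
        (fun q : EuclideanSpace ℝ (Fin n) × EuclideanSpace ℝ (Fin n) =>
          ENNReal.ofReal ‖(f₀ (x0star n t q.1 q.2) * f₁ q.2) • κ₁ q‖)
          ((1 - t) • p.1 + t • p.2, p.2) ∂(volume.prod volume)
        = ∫⁻ p : EuclideanSpace ℝ (Fin n) × EuclideanSpace ℝ (Fin n),
            ENNReal.ofReal ‖(f₀ p.1 * f₁ p.2) •
              (h ((1 - t) • p.1 + t • p.2) • (p.2 - p.1))‖ ∂(volume.prod volume) := by
      refine lintegral_congr fun p => ?_
      rw [hκ₁def]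
      simp only [x0star_interp ht1]
    rw [e2]
    -- the integrand with h is integrable by domination
    have hG₁m : Measurable (fun p : EuclideanSpace ℝ (Fin n) × EuclideanSpace ℝ (Fin n) =>
        (f₀ p.1 * f₁ p.2) • (h ((1 - t) • p.1 + t • p.2) • (p.2 - p.1))) :=
      by fun_prop
    have hG₁int : Integrable (fun p : EuclideanSpace ℝ (Fin n) × EuclideanSpace ℝ (Fin n) =>
        (f₀ p.1 * f₁ p.2) • (h ((1 - t) • p.1 + t • p.2) • (p.2 - p.1)))
        (volume.prod volume) := by
      refine Integrable.mono' (hgint.const_mul C) hG₁m.aestronglyMeasurable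
        (Filter.Eventually.of_forall fun p => ?_)
      rw [norm_smul, norm_smul, Real.norm_eq_abs, Real.norm_eq_abs,
        abs_of_nonneg (mul_nonneg (hf₀0 _) (hf₁0 _))]
      have h1 : ‖p.2 - p.1‖ ≤ ‖p.1‖ + ‖p.2‖ := by
        calc ‖p.2 - p.1‖ ≤ ‖p.2‖ + ‖p.1‖ := norm_sub_le _ _
          _ = ‖p.1‖ + ‖p.2‖ := by ring
      have h2 : 0 ≤ f₀ p.1 * f₁ p.2 := mul_nonneg (hf₀0 _) (hf₁0 _)
      have h3 : |h ((1 - t) • p.1 + t • p.2)| ≤ C := hC _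
      have h4 : (0:ℝ) ≤ |h ((1 - t) • p.1 + t • p.2)| := abs_nonneg _
      nlinarith [mul_le_mul_of_nonneg_left h1 h2, norm_nonneg p.1, norm_nonneg p.2,
        hf₀0 p.1, hf₁0 p.2, norm_nonneg (p.2 - p.1),
        mul_le_mul_of_nonneg_left (mul_le_mul_of_nonneg_right h3 (norm_nonneg (p.2 - p.1))) h2,
        mul_le_mul_of_nonneg_left (mul_le_mul_of_nonneg_left h1 hC0) h2]
    have := hG₁int.2
    rw [hasFiniteIntegral_iff_norm] at this
    exact ENNReal.mul_lt_top ENNReal.ofReal_lt_top this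
  -- integrability of Ψ₂
  have hΨ₂m : Measurable (fun p : EuclideanSpace ℝ (Fin n) × EuclideanSpace ℝ (Fin n) =>
      (f₀ (x0star n t p.1 p.2) * f₁ p.2) • κ₂ p) := (si_meas_denInt hf₀m hf₁m).smul hκ₂m
  have hΨ₂int : Integrable (fun p : EuclideanSpace ℝ (Fin n) × EuclideanSpace ℝ (Fin n) =>
      (f₀ (x0star n t p.1 p.2) * f₁ p.2) • κ₂ p) (volume.prod volume) := by
    refine ⟨hΨ₂m.aestronglyMeasurable, ?_⟩
    rw [hasFiniteIntegral_iff_norm,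
      MeasureTheory.lintegral_prod _ hΨ₂m.norm.ennreal_ofReal.aemeasurable]
    have key : ∀ x : EuclideanSpace ℝ (Fin n),
        (∫⁻ b, ENNReal.ofReal ‖(f₀ (x0star n t x b) * f₁ b) • κ₂ (x, b)‖ ∂volume)
          ≤ ENNReal.ofReal C * Nfun x := by
      intro x
      have e1 : (∫⁻ b, ENNReal.ofReal ‖(f₀ (x0star n t x b) * f₁ b) • κ₂ (x, b)‖ ∂volume)
          = (∫⁻ b, ENNReal.ofReal (f₀ (x0star n t x b) * f₁ b) ∂volume) *
              ENNReal.ofReal ‖h x • Fmap n f₀ f₁ t x‖ := by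
        have hmx : Measurable (fun b => ENNReal.ofReal (f₀ (x0star n t x b) * f₁ b)) :=
          ((si_meas_denInt hf₀m hf₁m).comp measurable_prodMk_left).ennreal_ofReal
        rw [← lintegral_mul_const _ hmx]
        refine lintegral_congr fun b => ?_
        rw [hκ₂def]
        rw [norm_smul (f₀ (x0star n t x b) * f₁ b), Real.norm_eq_abs,
          abs_of_nonneg (mul_nonneg (hf₀0 _) (hf₁0 _)),
          ENNReal.ofReal_mul (mul_nonneg (hf₀0 _) (hf₁0 _))]
      rw [e1]
      by_cases hguard : Integrable (fun y => f₀ (x0star n t x y) * f₁ y) volume ∧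
          0 < Fden n f₀ f₁ t x ∧
          Integrable (fun y => (f₀ (x0star n t x y) * f₁ y) • (y - x0star n t x y)) volume
      · obtain ⟨hdenx, hposx, hnumx⟩ := hguard
        have eD : (∫⁻ b, ENNReal.ofReal (f₀ (x0star n t x b) * f₁ b) ∂volume)
            = ENNReal.ofReal (Fden n f₀ f₁ t x) :=
          (MeasureTheory.ofReal_integral_eq_lintegral_ofReal hdenx
            (Filter.Eventually.of_forall fun y => mul_nonneg (hf₀0 _) (hf₁0 _))).symm
        have eF : Fmap n f₀ f₁ t x = (Fden n f₀ f₁ t x)⁻¹ • Fnum n f₀ f₁ t x := by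
          rw [Fmap, if_pos ⟨hdenx, hposx, hnumx⟩]
        have hFnn : ‖Fnum n f₀ f₁ t x‖
            ≤ ∫ y, ‖(f₀ (x0star n t x y) * f₁ y) • (y - x0star n t x y)‖ ∂volume := by
          rw [Fnum]; exact norm_integral_le_integral_norm _
        have eN : ENNReal.ofReal
            (∫ y, ‖(f₀ (x0star n t x y) * f₁ y) • (y - x0star n t x y)‖ ∂volume) = Nfun x :=
          MeasureTheory.ofReal_integral_eq_lintegral_ofReal hnumx.norm
            (Filter.Eventually.of_forall fun y => norm_nonneg _)
        have hFden0 : 0 ≤ Fden n f₀ f₁ t x := le_of_lt hposx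
        have hnorm : ‖h x • ((Fden n f₀ f₁ t x)⁻¹ • Fnum n f₀ f₁ t x)‖
            = |h x| * ((Fden n f₀ f₁ t x)⁻¹ * ‖Fnum n f₀ f₁ t x‖) := by
          rw [norm_smul, norm_smul, Real.norm_eq_abs, Real.norm_eq_abs,
            abs_of_nonneg (inv_nonneg.mpr hFden0)]
        have harith : Fden n f₀ f₁ t x *
            (|h x| * ((Fden n f₀ f₁ t x)⁻¹ * ‖Fnum n f₀ f₁ t x‖))
            = |h x| * ‖Fnum n f₀ f₁ t x‖ := by
          have hne : Fden n f₀ f₁ t x ≠ 0 := ne_of_gt hposx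
          field_simp
        rw [eD, eF, ← ENNReal.ofReal_mul hFden0, hnorm, harith]
        calc ENNReal.ofReal (|h x| * ‖Fnum n f₀ f₁ t x‖)
            ≤ ENNReal.ofReal (C *
                ∫ y, ‖(f₀ (x0star n t x y) * f₁ y) • (y - x0star n t x y)‖ ∂volume) :=
              ENNReal.ofReal_le_ofReal (mul_le_mul (hC x) hFnn (norm_nonneg _) hC0)
          _ = ENNReal.ofReal C * Nfun x := by rw [ENNReal.ofReal_mul hC0, eN]
      · have : Fmap n f₀ f₁ t x = 0 := by rw [Fmap, if_neg hguard]
        rw [this, smul_zero, norm_zero, ENNReal.ofReal_zero, mul_zero]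
        exact zero_le
    calc (∫⁻ x, ∫⁻ b, ENNReal.ofReal
          ‖(f₀ (x0star n t x b) * f₁ b) • κ₂ (x, b)‖ ∂volume ∂volume)
        ≤ ∫⁻ x, ENNReal.ofReal C * Nfun x ∂volume := lintegral_mono key
      _ = ENNReal.ofReal C * ∫⁻ x, Nfun x ∂volume := lintegral_const_mul _ hNmeas
      _ < ⊤ := ENNReal.mul_lt_top ENNReal.ofReal_lt_top (lt_top_iff_ne_top.mpr hNtot)
  -- final chain
  calc ∫ ω, h ((1 - t) • X₀ ω + t • X₁ ω) • (X₁ ω - X₀ ω) ∂μ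
      = ∫ ω, κ₁ ((1 - t) • X₀ ω + t • X₁ ω, X₁ ω) ∂μ := by
        refine integral_congr_ae (Filter.Eventually.of_forall fun ω => ?_)
        rw [hκ₁def]
        simp only [x0star_interp ht1]
    _ = ((1 - t) ^ n)⁻¹ •
          ∫ x, ∫ b, (f₀ (x0star n t x b) * f₁ b) • κ₁ (x, b) ∂volume ∂volume :=
        si_reduce μ X₀ X₁ hX₀ hX₁ hindep f₀ f₁ hf₀m hf₁m hf₀0 hf₁0 hlaw₀ hlaw₁ ht1 κ₁ hκ₁m hΨ₁int
    _ = ((1 - t) ^ n)⁻¹ • ∫ x, h x • Fnum n f₀ f₁ t x ∂volume := by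
        congr 1
        refine integral_congr_ae (Filter.Eventually.of_forall fun x => ?_)
        calc ∫ b, (f₀ (x0star n t x b) * f₁ b) • κ₁ (x, b) ∂volume
            = ∫ b, h x • ((f₀ (x0star n t x b) * f₁ b) • (b - x0star n t x b)) ∂volume := by
              refine integral_congr_ae (Filter.Eventually.of_forall fun b => ?_)
              rw [hκ₁def]
              exact (smul_comm _ _ _).symm
          _ = h x • ∫ b, (f₀ (x0star n t x b) * f₁ b) • (b - x0star n t x b) ∂volume :=
              integral_smul _ _
          _ = h x • Fnum n f₀ f₁ t x := rfl
    _ = ((1 - t) ^ n)⁻¹ • ∫ x, Fden n f₀ f₁ t x • (h x • Fmap n f₀ f₁ t x) ∂volume := by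
        congr 1
        exact integral_congr_ae hae_key
    _ = ((1 - t) ^ n)⁻¹ •
          ∫ x, ∫ b, (f₀ (x0star n t x b) * f₁ b) • κ₂ (x, b) ∂volume ∂volume := by
        congr 1
        refine integral_congr_ae (Filter.Eventually.of_forall fun x => ?_)
        calc Fden n f₀ f₁ t x • (h x • Fmap n f₀ f₁ t x)
            = (∫ b, f₀ (x0star n t x b) * f₁ b ∂volume) • (h x • Fmap n f₀ f₁ t x) := rfl
          _ = ∫ b, (f₀ (x0star n t x b) * f₁ b) • (h x • Fmap n f₀ f₁ t x) ∂volume :=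
              (integral_smul_const _ _).symm
          _ = ∫ b, (f₀ (x0star n t x b) * f₁ b) • κ₂ (x, b) ∂volume := by
              rw [hκ₂def]
    _ = ∫ ω, κ₂ ((1 - t) • X₀ ω + t • X₁ ω, X₁ ω) ∂μ :=
        (si_reduce μ X₀ X₁ hX₀ hX₁ hindep f₀ f₁ hf₀m hf₁m hf₀0 hf₁0 hlaw₀ hlaw₁ ht1 κ₂
          hκ₂m hΨ₂int).symm
    _ = ∫ ω, h ((1 - t) • X₀ ω + t • X₁ ω) •
          Fmap n f₀ f₁ t ((1 - t) • X₀ ω + t • X₁ ω) ∂μ := rfl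

end
end

section
/- For (law of X_t)-almost every x ∈ ℝⁿ, the conditional distribution of X₁ given X_t = x (i.e. the regular conditional probability distribution / disintegration of the joint law of (X_t, X₁)) is absolutely continuous with respect to n-dimensional Lebesgue measure, with density y ↦ f₀(x₀*(x,y)) · f₁(y) / (∫_{ℝⁿ} f₀(x₀*(x,y')) · f₁(y') dy'). (This is the conditional reweighting underlying the importance-sampling formula of Theorem 1 of the paper: given X_t = x, each data sample x₁ is weighted proportionally to the likelihood of its implied initial noise point x₀*(x, x₁).) -/
open MeasureTheory ProbabilityTheory
open scoped ENNReal

noncomputable section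

/-- Auxiliary: the unnormalized joint density in `(x, y)`. -/
def jointW (n : ℕ) (t : ℝ) (f₀ f₁ : EuclideanSpace ℝ (Fin n) → ℝ)
    (x y : EuclideanSpace ℝ (Fin n)) : ℝ :=
  f₀ (x0star n t x y) * f₁ y

/-- Auxiliary: the normalizing constant at `x`. -/
def normW (n : ℕ) (t : ℝ) (f₀ f₁ : EuclideanSpace ℝ (Fin n) → ℝ)
    (x : EuclideanSpace ℝ (Fin n)) : ℝ :=
  ∫ y', jointW n t f₀ f₁ x y'

/-- Auxiliary: the candidate conditional density. -/
def gW (n : ℕ) (t : ℝ) (f₀ f₁ : EuclideanSpace ℝ (Fin n) → ℝ)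
    (x y : EuclideanSpace ℝ (Fin n)) : ℝ≥0∞ :=
  ENNReal.ofReal (jointW n t f₀ f₁ x y / normW n t f₀ f₁ x)

/-- For (law of `X_t`)-a.e. `x`, the conditional distribution of `X₁` given `X_t = x` is
absolutely continuous with respect to Lebesgue measure, with density
`y ↦ f₀(x₀*(x,y)) f₁(y) / ∫ f₀(x₀*(x,y')) f₁(y') dy'`. -/
theorem stmt5 {Ω : Type*} [MeasurableSpace Ω] (μ : Measure Ω) [IsProbabilityMeasure μ]
    {n : ℕ} (hn : 1 ≤ n)
    (X₀ X₁ : Ω → EuclideanSpace ℝ (Fin n)) (hX₀ : Measurable X₀) (hX₁ : Measurable X₁)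
    (hindep : IndepFun X₀ X₁ μ)
    (f₀ f₁ : EuclideanSpace ℝ (Fin n) → ℝ)
    (hf₀m : Measurable f₀) (hf₁m : Measurable f₁)
    (hf₀0 : ∀ z, 0 ≤ f₀ z) (hf₁0 : ∀ z, 0 ≤ f₁ z)
    (hlaw₀ : Measure.map X₀ μ = volume.withDensity (fun z => ENNReal.ofReal (f₀ z)))
    (hlaw₁ : Measure.map X₁ μ = volume.withDensity (fun z => ENNReal.ofReal (f₁ z)))
    (t : ℝ) (ht0 : 0 ≤ t) (ht1 : t < 1) :
    ∀ᵐ x ∂(Measure.map (fun ω => (1 - t) • X₀ ω + t • X₁ ω) μ),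
      condDistrib X₁ (fun ω => (1 - t) • X₀ ω + t • X₁ ω) μ x
        = volume.withDensity
            (fun y => ENNReal.ofReal
              (f₀ (x0star n t x y) * f₁ y / ∫ y', f₀ (x0star n t x y') * f₁ y')) := by
  classical
  have ht : (0:ℝ) < 1 - t := by linarith
  have ht' : (1 - t) ≠ 0 := ne_of_gt ht
  set Xt : Ω → (EuclideanSpace ℝ (Fin n)) := fun ω => (1 - t) • X₀ ω + t • X₁ ω with hXt_def
  have hXt : Measurable Xt := by
    have hm : Measurable fun ω => (1 - t) • X₀ ω + t • X₁ ω :=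
      ((measurable_const_smul (1 - t)).comp hX₀).add ((measurable_const_smul t).comp hX₁)
    rwa [hXt_def]
  -- joint measurability of `x0star`
  have hx0m : Measurable (fun q : (EuclideanSpace ℝ (Fin n)) × (EuclideanSpace ℝ (Fin n)) => x0star n t q.1 q.2) := by
    have : (fun q : (EuclideanSpace ℝ (Fin n)) × (EuclideanSpace ℝ (Fin n)) => x0star n t q.1 q.2)
        = fun q : (EuclideanSpace ℝ (Fin n)) × (EuclideanSpace ℝ (Fin n)) => (1 - t)⁻¹ • (q.1 - t • q.2) := rfl
    rw [this]
    exact ((measurable_fst.sub ((measurable_snd (α := (EuclideanSpace ℝ (Fin n))) (β := (EuclideanSpace ℝ (Fin n)))).const_smul t)).const_smul ((1 - t)⁻¹ : ℝ))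
  -- the unnormalized joint density
  set h : (EuclideanSpace ℝ (Fin n)) → (EuclideanSpace ℝ (Fin n)) → ℝ := jointW n t f₀ f₁ with hh_def
  have hhm : Measurable (fun q : (EuclideanSpace ℝ (Fin n)) × (EuclideanSpace ℝ (Fin n)) => h q.1 q.2) :=
    (hf₀m.comp hx0m).mul (hf₁m.comp measurable_snd)
  have hhnn : ∀ x y, 0 ≤ h x y := fun x y => mul_nonneg (hf₀0 _) (hf₁0 _)
  have hhsec : ∀ x, Measurable (h x) := fun x => hhm.comp (measurable_prodMk_left)
  set D : (EuclideanSpace ℝ (Fin n)) → ℝ := normW n t f₀ f₁ with hD_def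
  have hDm : Measurable D :=
    (hhm.stronglyMeasurable.integral_prod_right').measurable
  set g : (EuclideanSpace ℝ (Fin n)) → (EuclideanSpace ℝ (Fin n)) → ℝ≥0∞ := gW n t f₀ f₁ with hg_def
  have hgm : Measurable (Function.uncurry g) := by
    have : Function.uncurry g = fun q : (EuclideanSpace ℝ (Fin n)) × (EuclideanSpace ℝ (Fin n)) => ENNReal.ofReal (h q.1 q.2 / D q.1) := rfl
    rw [this]
    exact (hhm.div (hDm.comp measurable_fst)).ennreal_ofReal
  -- the candidate kernel
  set κ : Kernel (EuclideanSpace ℝ (Fin n)) (EuclideanSpace ℝ (Fin n)) := Kernel.withDensity (Kernel.const (EuclideanSpace ℝ (Fin n)) volume) g with hκ_def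
  have hκapp : ∀ x, κ x = volume.withDensity (g x) := by
    intro x
    rw [hκ_def, Kernel.withDensity_apply _ hgm, Kernel.const_apply]
  -- the kernel is (sub-)Markov, in particular finite
  have hκuniv : ∀ x, κ x Set.univ ≤ 1 := by
    intro x
    rw [hκapp, withDensity_apply _ MeasurableSet.univ, Measure.restrict_univ]
    rcases le_or_gt (D x) 0 with hD0 | hDpos
    · have hz : ∀ y, g x y = 0 := by
        intro y
        have hle : h x y / D x ≤ 0 := div_nonpos_of_nonneg_of_nonpos (hhnn x y) hD0
        exact ENNReal.ofReal_eq_zero.2 hle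
      simp [hz]
    · have hint : Integrable (h x) volume := by
        by_contra hni
        rw [hD_def, normW, ← hh_def, integral_undef hni] at hDpos
        exact lt_irrefl _ hDpos
      have hone : ∫⁻ y, g x y ∂volume = ENNReal.ofReal (∫ y, h x y / D x) := by
        refine (ofReal_integral_eq_lintegral_ofReal (hint.div_const _)
          (Filter.Eventually.of_forall fun y => div_nonneg (hhnn x y) hDpos.le)).symm
      rw [hone]
      have : ∫ y, h x y / D x = 1 := by
        rw [integral_div]
        exact div_self hDpos.ne'
      rw [this]
      simp
  haveI : IsFiniteKernel κ := ⟨⟨1, ENNReal.one_lt_top, fun x => hκuniv x⟩⟩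
  -- the joint density constant
  set C : ℝ≥0∞ := ENNReal.ofReal |((1 - t) ^ n)⁻¹| with hC_def
  have hCpos : (0:ℝ) < ((1 - t) ^ n)⁻¹ := inv_pos.2 (pow_pos ht n)
  have hC0 : C ≠ 0 := by
    rw [hC_def]
    exact (ENNReal.ofReal_pos.2 (abs_pos.2 hCpos.ne')).ne'
  have hCtop : C ≠ ∞ := ENNReal.ofReal_ne_top
  set p : (EuclideanSpace ℝ (Fin n)) × (EuclideanSpace ℝ (Fin n)) → ℝ≥0∞ := fun q => C * ENNReal.ofReal (h q.1 q.2) with hp_def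
  have hpm : Measurable p := measurable_const.mul hhm.ennreal_ofReal
  -- the affine change of variables in the first coordinate
  have hφmap : ∀ b : (EuclideanSpace ℝ (Fin n)), Measure.map (fun a : (EuclideanSpace ℝ (Fin n)) => (1 - t) • a + t • b) volume
      = C • volume := by
    intro b
    have hco : (fun a : (EuclideanSpace ℝ (Fin n)) => (1 - t) • a + t • b)
        = (fun x : (EuclideanSpace ℝ (Fin n)) => x + t • b) ∘ (fun a : (EuclideanSpace ℝ (Fin n)) => (1 - t) • a) := rfl
    rw [hco, ← Measure.map_map (measurable_add_const _) (measurable_const_smul _),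
      Measure.map_addHaar_smul volume ht', finrank_euclideanSpace_fin,
      Measure.map_smul, Measure.IsAddRightInvariant.map_add_right_eq_self, hC_def]
  have hx0φ : ∀ (a b : (EuclideanSpace ℝ (Fin n))), x0star n t ((1 - t) • a + t • b) b = a := by
    intro a b
    simp only [x0star, add_sub_cancel_right, smul_smul, inv_mul_cancel₀ ht', one_smul]
  -- Step A : the joint law has density p
  have hρ : μ.map (fun ω => (Xt ω, X₁ ω)) = (volume.prod volume).withDensity p := by
    have hpair : μ.map (fun ω => (X₀ ω, X₁ ω)) = (μ.map X₀).prod (μ.map X₁) :=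
      (indepFun_iff_map_prod_eq_prod_map_map hX₀.aemeasurable hX₁.aemeasurable).1 hindep
    have hT : Measurable (fun q : (EuclideanSpace ℝ (Fin n)) × (EuclideanSpace ℝ (Fin n)) => ((1 - t) • q.1 + t • q.2, q.2)) :=
      (((measurable_fst (α := (EuclideanSpace ℝ (Fin n))) (β := (EuclideanSpace ℝ (Fin n)))).const_smul (1 - t : ℝ)).add ((measurable_snd (α := (EuclideanSpace ℝ (Fin n))) (β := (EuclideanSpace ℝ (Fin n)))).const_smul (t : ℝ))).prodMk measurable_snd
    have hcomp : (fun ω => (Xt ω, X₁ ω))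
        = (fun q : (EuclideanSpace ℝ (Fin n)) × (EuclideanSpace ℝ (Fin n)) => ((1 - t) • q.1 + t • q.2, q.2)) ∘ (fun ω => (X₀ ω, X₁ ω)) := rfl
    rw [hcomp, ← Measure.map_map hT (hX₀.prodMk hX₁), hpair, hlaw₀, hlaw₁]
    ext s hs
    rw [Measure.map_apply hT hs, withDensity_apply _ hs, Measure.prod_apply_symm (hT hs)]
    -- fix the second coordinate b
    have hsb : ∀ b : (EuclideanSpace ℝ (Fin n)), MeasurableSet {x : (EuclideanSpace ℝ (Fin n)) | (x, b) ∈ s} :=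
      fun b => measurable_prodMk_right (y := b) hs
    have key : ∀ b : (EuclideanSpace ℝ (Fin n)),
        (volume.withDensity fun z => ENNReal.ofReal (f₀ z))
            ((fun x : (EuclideanSpace ℝ (Fin n)) => (x, b)) ⁻¹' ((fun q : (EuclideanSpace ℝ (Fin n)) × (EuclideanSpace ℝ (Fin n)) => ((1 - t) • q.1 + t • q.2, q.2)) ⁻¹' s))
          = C * ∫⁻ x, Set.indicator {x : (EuclideanSpace ℝ (Fin n)) | (x, b) ∈ s}
              (fun x => ENNReal.ofReal (f₀ (x0star n t x b))) x ∂volume := by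
      intro b
      have hset : ((fun x : (EuclideanSpace ℝ (Fin n)) => (x, b)) ⁻¹'
            ((fun q : (EuclideanSpace ℝ (Fin n)) × (EuclideanSpace ℝ (Fin n)) => ((1 - t) • q.1 + t • q.2, q.2)) ⁻¹' s))
          = (fun a : (EuclideanSpace ℝ (Fin n)) => (1 - t) • a + t • b) ⁻¹' {x : (EuclideanSpace ℝ (Fin n)) | (x, b) ∈ s} := rfl
      have hψm : Measurable fun x : (EuclideanSpace ℝ (Fin n)) => ENNReal.ofReal (f₀ (x0star n t x b)) :=
        (hf₀m.comp (hx0m.comp (measurable_prodMk_right (y := b)))).ennreal_ofReal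
      have hφm : Measurable fun a : (EuclideanSpace ℝ (Fin n)) => (1 - t) • a + t • b :=
        ((measurable_id (α := (EuclideanSpace ℝ (Fin n)))).const_smul (1 - t : ℝ)).add_const (t • b)
      rw [hset, withDensity_apply _ (hφm (hsb b)), ← lintegral_indicator (hφm (hsb b))]
      have hind : ∀ a : (EuclideanSpace ℝ (Fin n)),
          Set.indicator ((fun a : (EuclideanSpace ℝ (Fin n)) => (1 - t) • a + t • b) ⁻¹' {x : (EuclideanSpace ℝ (Fin n)) | (x, b) ∈ s})
              (fun a => ENNReal.ofReal (f₀ a)) a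
            = Set.indicator {x : (EuclideanSpace ℝ (Fin n)) | (x, b) ∈ s}
                (fun x => ENNReal.ofReal (f₀ (x0star n t x b))) ((1 - t) • a + t • b) := by
        intro a
        by_cases hmem : ((1 - t) • a + t • b, b) ∈ s
        · rw [Set.indicator_of_mem (by exact hmem), Set.indicator_of_mem (by exact hmem),
            hx0φ a b]
        · rw [Set.indicator_of_notMem (by exact hmem), Set.indicator_of_notMem (by exact hmem)]
      calc ∫⁻ a, Set.indicator ((fun a : (EuclideanSpace ℝ (Fin n)) => (1 - t) • a + t • b) ⁻¹' {x : (EuclideanSpace ℝ (Fin n)) | (x, b) ∈ s})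
              (fun a => ENNReal.ofReal (f₀ a)) a ∂volume
          = ∫⁻ a, Set.indicator {x : (EuclideanSpace ℝ (Fin n)) | (x, b) ∈ s}
              (fun x => ENNReal.ofReal (f₀ (x0star n t x b))) ((1 - t) • a + t • b) ∂volume := by
            exact lintegral_congr hind
        _ = ∫⁻ x, Set.indicator {x : (EuclideanSpace ℝ (Fin n)) | (x, b) ∈ s}
              (fun x => ENNReal.ofReal (f₀ (x0star n t x b))) x
              ∂(Measure.map (fun a : (EuclideanSpace ℝ (Fin n)) => (1 - t) • a + t • b) volume) := by
            rw [lintegral_map (hψm.indicator (hsb b)) hφm]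
        _ = C * ∫⁻ x, Set.indicator {x : (EuclideanSpace ℝ (Fin n)) | (x, b) ∈ s}
              (fun x => ENNReal.ofReal (f₀ (x0star n t x b))) x ∂volume := by
            rw [hφmap b, lintegral_smul_measure, smul_eq_mul]
    rw [lintegral_congr key]
    -- now integrate over b against the density f₁
    have hGm : Measurable fun q : (EuclideanSpace ℝ (Fin n)) × (EuclideanSpace ℝ (Fin n)) =>
        Set.indicator s (fun q : (EuclideanSpace ℝ (Fin n)) × (EuclideanSpace ℝ (Fin n)) => ENNReal.ofReal (f₀ (x0star n t q.1 q.2))) q :=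
      ((hf₀m.comp hx0m).ennreal_ofReal).indicator hs
    have hinm : Measurable fun b : (EuclideanSpace ℝ (Fin n)) => ∫⁻ x, Set.indicator {x : (EuclideanSpace ℝ (Fin n)) | (x, b) ∈ s}
        (fun x => ENNReal.ofReal (f₀ (x0star n t x b))) x ∂volume := by
      have heq : (fun b : (EuclideanSpace ℝ (Fin n)) => ∫⁻ x, Set.indicator {x : (EuclideanSpace ℝ (Fin n)) | (x, b) ∈ s}
          (fun x => ENNReal.ofReal (f₀ (x0star n t x b))) x ∂volume)
          = fun b : (EuclideanSpace ℝ (Fin n)) => ∫⁻ x, Set.indicator s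
              (fun q : (EuclideanSpace ℝ (Fin n)) × (EuclideanSpace ℝ (Fin n)) => ENNReal.ofReal (f₀ (x0star n t q.1 q.2))) (x, b) ∂volume := by
        funext b
        refine lintegral_congr fun x => ?_
        by_cases hmem : (x, b) ∈ s
        · rw [Set.indicator_of_mem (by exact hmem), Set.indicator_of_mem (by exact hmem)]
        · rw [Set.indicator_of_notMem (by exact hmem),
            Set.indicator_of_notMem (by exact hmem)]
      rw [heq]
      exact hGm.lintegral_prod_left'
    rw [lintegral_withDensity_eq_lintegral_mul volume hf₁m.ennreal_ofReal
      (hinm.const_mul C)]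
    have hfin : ∀ b : (EuclideanSpace ℝ (Fin n)),
        ENNReal.ofReal (f₁ b) * (C * ∫⁻ x,
        Set.indicator {x : (EuclideanSpace ℝ (Fin n)) | (x, b) ∈ s}
          (fun x => ENNReal.ofReal (f₀ (x0star n t x b))) x ∂volume)
        = ∫⁻ x, Set.indicator s p (x, b) ∂volume := by
      intro b
      have hmeasb : Measurable fun x => Set.indicator
          {x : (EuclideanSpace ℝ (Fin n)) | (x, b) ∈ s}
          (fun x => ENNReal.ofReal (f₀ (x0star n t x b))) x := by
        exact (((hf₀m.comp (hx0m.comp (measurable_prodMk_right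
          (y := b)))).ennreal_ofReal)).indicator (hsb b)
      rw [← mul_assoc, ← lintegral_const_mul _ hmeasb]
      refine lintegral_congr fun x => ?_
      by_cases hmem : (x, b) ∈ s
      · rw [Set.indicator_of_mem (by exact hmem), Set.indicator_of_mem (by exact hmem), hp_def]
        simp only [hh_def, jointW]
        rw [ENNReal.ofReal_mul (hf₀0 _)]
        ring
      · rw [Set.indicator_of_notMem (by exact hmem), Set.indicator_of_notMem (by exact hmem),
          mul_zero]
    trans (∫⁻ b, ∫⁻ x, Set.indicator s p (x, b) ∂volume ∂volume)
    · exact lintegral_congr fun b => by simpa only [Pi.mul_apply] using hfin b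
    · rw [← MeasureTheory.lintegral_prod_symm' _ (hpm.indicator hs),
        lintegral_indicator hs]
  -- Step B : the law of Xt has density Dp
  set Dp : (EuclideanSpace ℝ (Fin n)) → ℝ≥0∞ := fun x => ∫⁻ y, p (x, y) ∂volume with hDp_def
  have hDpm : Measurable Dp := hpm.lintegral_prod_right'
  have hν : μ.map Xt = volume.withDensity Dp := by
    ext s hs
    have hXtpre : (fun ω => (Xt ω, X₁ ω)) ⁻¹' (s ×ˢ Set.univ) = Xt ⁻¹' s := by
      ext ω; simp
    have h1 : μ.map Xt s = μ.map (fun ω => (Xt ω, X₁ ω)) (s ×ˢ Set.univ) := by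
      rw [Measure.map_apply hXt hs,
        Measure.map_apply (hXt.prodMk hX₁) (hs.prod MeasurableSet.univ), hXtpre]
    rw [h1, hρ, withDensity_apply _ (hs.prod MeasurableSet.univ),
      ← lintegral_indicator (hs.prod MeasurableSet.univ),
      MeasureTheory.lintegral_prod _ ((hpm.indicator (hs.prod MeasurableSet.univ)).aemeasurable)]
    have hinner : ∀ x : (EuclideanSpace ℝ (Fin n)), ∫⁻ y, Set.indicator (s ×ˢ Set.univ) p (x, y) ∂volume
        = Set.indicator s Dp x := by
      intro x
      by_cases hx : x ∈ s
      · rw [Set.indicator_of_mem hx]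
        refine lintegral_congr fun y => ?_
        rw [Set.indicator_of_mem (by simp [hx])]
      · rw [Set.indicator_of_notMem hx]
        have : ∀ y : (EuclideanSpace ℝ (Fin n)), Set.indicator (s ×ˢ Set.univ) p (x, y) = 0 := by
          intro y
          rw [Set.indicator_of_notMem (by simp [hx])]
        simp [this]
    rw [lintegral_congr hinner, withDensity_apply _ hs, ← lintegral_indicator hs]
  -- Step C : Dp is a.e. finite
  haveI : IsProbabilityMeasure (μ.map Xt) := Measure.isProbabilityMeasure_map hXt.aemeasurable
  have hDpfin : ∀ᵐ x ∂(volume : Measure (EuclideanSpace ℝ (Fin n))), Dp x < ∞ := by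
    refine ae_lt_top hDpm ?_
    have : ∫⁻ x, Dp x ∂volume = μ.map Xt Set.univ := by
      rw [hν, withDensity_apply _ MeasurableSet.univ, Measure.restrict_univ]
    rw [this, measure_univ]
    exact ENNReal.one_ne_top
  -- Step D : the compProd identity
  have hcompProd : μ.map (fun ω => (Xt ω, X₁ ω)) = (μ.map Xt) ⊗ₘ κ := by
    rw [hρ]
    ext s hs
    rw [Measure.compProd_apply hs, hν,
      lintegral_withDensity_eq_lintegral_mul volume hDpm
        (Kernel.measurable_kernel_prodMk_left hs),
      withDensity_apply _ hs, ← lintegral_indicator hs,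
      MeasureTheory.lintegral_prod _ (hpm.indicator hs).aemeasurable]
    refine lintegral_congr_ae ?_
    filter_upwards [hDpfin] with x hx
    -- pointwise (in x) identification of the fiber measures
    have hLm : Measurable fun y => ENNReal.ofReal (h x y) := (hhsec x).ennreal_ofReal
    set L : ℝ≥0∞ := ∫⁻ y, ENNReal.ofReal (h x y) ∂volume with hL_def
    have hDpL : Dp x = C * L := by
      rw [hDp_def]
      simp only [hp_def]
      rw [lintegral_const_mul _ hLm]
    have hLtop : L ≠ ∞ := by
      intro hcon
      rw [hDpL, hcon, ENNReal.mul_top hC0] at hx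
      exact absurd hx (lt_irrefl _)
    have hxy : (fun y => p (x, y)) =ᵐ[volume] fun y => Dp x * g x y := by
      rcases eq_or_ne L 0 with hL0 | hLpos
      · have hL0' : ∫⁻ y, ENNReal.ofReal (h x y) ∂volume = 0 := by rw [← hL_def]; exact hL0
        have hae : (fun y => ENNReal.ofReal (h x y)) =ᵐ[volume] 0 :=
          (lintegral_eq_zero_iff hLm).1 hL0'
        filter_upwards [hae] with y hy
        simp only [Pi.zero_apply] at hy
        show p (x, y) = Dp x * g x y
        simp only [hp_def, hy, hDpL, hL0, mul_zero, zero_mul]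
      · have hint : Integrable (h x) volume := by
          refine ⟨(hhsec x).aestronglyMeasurable, ?_⟩
          rw [hasFiniteIntegral_iff_ofReal (Filter.Eventually.of_forall (hhnn x))]
          exact lt_of_le_of_ne le_top hLtop
        have hDeq : D x = L.toReal := by
          rw [hD_def, normW, ← hh_def,
            integral_eq_lintegral_of_nonneg_ae (Filter.Eventually.of_forall (hhnn x))
              (hhsec x).aestronglyMeasurable, hL_def]
        have hDxpos : 0 < D x := by
          rw [hDeq]
          exact ENNReal.toReal_pos hLpos hLtop
        refine Filter.Eventually.of_forall fun y => ?_
        have hofdiv : ENNReal.ofReal (h x y / D x) = ENNReal.ofReal (h x y) / L := by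
          rw [ENNReal.ofReal_div_of_pos hDxpos, hDeq, ENNReal.ofReal_toReal hLtop]
        have hgxy : g x y = ENNReal.ofReal (h x y) / L := hofdiv
        show p (x, y) = Dp x * g x y
        rw [hgxy, hDpL]
        show C * ENNReal.ofReal (h x y) = C * L * (ENNReal.ofReal (h x y) / L)
        rw [mul_assoc, ENNReal.mul_div_cancel hLpos hLtop]
    -- conclude the fiberwise integral identity
    have hsx : MeasurableSet (Prod.mk x ⁻¹' s) := measurable_prodMk_left hs
    simp only [Pi.mul_apply]
    rw [hκapp x, withDensity_apply _ hsx, ← lintegral_indicator hsx,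
      ← lintegral_const_mul' _ _ hx.ne]
    refine lintegral_congr_ae ?_
    filter_upwards [hxy] with y hy
    have hy' : p (x, y) = Dp x * g x y := hy
    by_cases hmem : (x, y) ∈ s
    · rw [Set.indicator_of_mem (by exact hmem), Set.indicator_of_mem (by exact hmem), hy']
    · rw [Set.indicator_of_notMem (by exact hmem), Set.indicator_of_notMem (by exact hmem),
        mul_zero]
  -- conclusion via the a.e. uniqueness of the disintegration kernel
  have hfinal := condDistrib_ae_eq_of_measure_eq_compProd_of_measurable (μ := μ) hXt hX₁ hcompProd
  filter_upwards [hfinal] with x hxeq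
  rw [hxeq, hκapp]
  rfl

end
end
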